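/- arXiv:2210.00436 — 2 statements merged into one kernel-verified Lean document; each statement's English description precedes it below -/
import Mathlib

section
/- Let 𝒜 be a hyperplane arrangement in V = 𝕂^ℓ. Fix H₀ ∈ 𝒜 and m₀ ∈ ℤ≥1 and let δ = δ_{H₀,m₀} be the multiplicity concentrated at H₀, i.e., δ(H₀) = m₀ and δ(H) = 1 for H ≠ H₀. Then 𝒜 is free with exponents {1, e₂, …, e_ℓ} if and only if (𝒜, δ) is free with exponents {m₀, e₂, …, e_ℓ}. -/
open Classical MvPolynomial Module
open scoped Classical

noncomputable section

namespace Arrangement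

variable (K : Type) [Field K]

/-- Index type for the polynomial ring `S = Sym(V*)`, realized as a polynomial
ring in coordinates coming from a chosen basis of `V`. -/
abbrev bIdx (V : Type) [AddCommGroup V] [Module K V] : Type := Basis.ofVectorSpaceIndex K V

/-- The coordinate ring `S = Sym(V*)` realized as a multivariate polynomial ring. -/
abbrev Poly (V : Type) [AddCommGroup V] [Module K V] : Type := MvPolynomial (bIdx K V) K

/-- Derivations of `S`, written in coordinates: a derivation is determined by its
values on the variables. -/
abbrev Der (V : Type) [AddCommGroup V] [Module K V] : Type := bIdx K V → Poly K V

variable {V : Type} [AddCommGroup V] [Module K V] [FiniteDimensional K V]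

/-- The degree one polynomial attached to a linear form on `V`. -/
def toPoly (f : Module.Dual K V) : Poly K V :=
  ∑ i : bIdx K V, MvPolynomial.C (f (Basis.ofVectorSpace K V i)) * MvPolynomial.X i

/-- Apply the derivation `θ` to a polynomial. -/
def applyDer (θ : Der K V) (p : Poly K V) : Poly K V :=
  ∑ i : bIdx K V, θ i * MvPolynomial.pderiv i p

/-- A choice of defining linear form for a hyperplane `H` (any linear form with
kernel `H`; for submodules that are not hyperplanes this is junk). -/
def formOf (H : Submodule K V) : Module.Dual K V :=
  if h : ∃ f : Module.Dual K V, LinearMap.ker f = H then h.choose else 0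

/-- The defining linear polynomial `α_H` of a hyperplane. -/
def polyOf (H : Submodule K V) : Poly K V := toPoly K (formOf K H)

/-- The module `D(𝒜, μ)` of derivations of the multiarrangement `(𝒜, μ)`. -/
def derMod (A : Finset (Submodule K V)) (μ : Submodule K V → ℕ) :
    Submodule (Poly K V) (Der K V) where
  carrier := {θ | ∀ H ∈ A, (polyOf K H) ^ (μ H) ∣ applyDer K θ (polyOf K H)}
  zero_mem' := by intro H hH; simp [applyDer]
  add_mem' := by
    intro a b ha hb H hH
    have h : applyDer K (a + b) (polyOf K H)
        = applyDer K a (polyOf K H) + applyDer K b (polyOf K H) := by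
      simp [applyDer, add_mul, Finset.sum_add_distrib]
    rw [h]; exact dvd_add (ha H hH) (hb H hH)
  smul_mem' := by
    intro c a ha H hH
    have h : applyDer K (c • a) (polyOf K H) = c * applyDer K a (polyOf K H) := by
      simp [applyDer, Finset.mul_sum, mul_assoc]
    rw [h]; exact Dvd.dvd.mul_left (ha H hH) c

/-- `θ` is homogeneous of polynomial degree `p` (in coordinates: all components
are homogeneous polynomials of degree `p`). -/
def IsHomogDer (θ : Der K V) (p : ℕ) : Prop := ∀ i, (θ i).IsHomogeneous p

/-- The multiarrangement `(𝒜, μ)` is free with exponents `E` : `D(𝒜,μ)` admits a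
homogeneous basis whose multiset of polynomial degrees is `E`. -/
def FreeExp (A : Finset (Submodule K V)) (μ : Submodule K V → ℕ) (E : Multiset ℕ) : Prop :=
  ∃ (b : Basis (Fin (Module.finrank K V)) (Poly K V) (derMod K A μ))
    (d : Fin (Module.finrank K V) → ℕ),
      (∀ j, IsHomogDer K (b j : Der K V) (d j)) ∧ E = Multiset.map d Finset.univ.val

/-- The multiarrangement `(𝒜, μ)` is free. -/
def IsFree (A : Finset (Submodule K V)) (μ : Submodule K V → ℕ) : Prop :=
  ∃ E, FreeExp K A μ E

/-- The constant multiplicity `1` (simple arrangement). -/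
def one : Submodule K V → ℕ := fun _ => 1

/-- The localization `𝒜_X` of `𝒜` at `X`. -/
def loc (A : Finset (Submodule K V)) (X : Submodule K V) : Finset (Submodule K V) :=
  A.filter fun H => X ≤ H

/-- The restriction `𝒜^{H₀}` of `𝒜` to `H₀`, as an arrangement in `H₀`. -/
def restr (A : Finset (Submodule K V)) (H₀ : Submodule K V) : Finset (Submodule K ↥H₀) :=
  (A.erase H₀).image fun H => H.comap H₀.subtype

/-- Ziegler's canonical multiplicity `κ` on the restriction `𝒜^{H₀}`:
`κ(Y) = |𝒜_Y| - 1`. -/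
def ziegler (A : Finset (Submodule K V)) (H₀ : Submodule K V) : Submodule K ↥H₀ → ℕ :=
  fun Y => (loc K A (Y.map H₀.subtype)).card - 1

/-- The order `|μ|` of a multiarrangement. -/
def msize (A : Finset (Submodule K V)) (μ : Submodule K V → ℕ) : ℕ := ∑ H ∈ A, μ H

/-- The rank of an arrangement: the codimension of the intersection of all its
hyperplanes. -/
def arrRank (A : Finset (Submodule K V)) : ℕ :=
  Module.finrank K V - Module.finrank K ↥(A.inf id)

/-- The multiplicity `δ_{H₀, m₀}` concentrated at `H₀`. -/
def concMult (H₀ : Submodule K V) (m₀ : ℕ) : Submodule K V → ℕ :=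
  fun H => if H = H₀ then m₀ else 1

/-- The underlying arrangement of the deletion `(𝒜', μ')` w.r.t. `H₀`. -/
def delArr (A : Finset (Submodule K V)) (μ : Submodule K V → ℕ) (H₀ : Submodule K V) :
    Finset (Submodule K V) :=
  if μ H₀ = 1 then A.erase H₀ else A

/-- The multiplicity of the deletion `(𝒜', μ')` w.r.t. `H₀`. -/
def delMult (μ : Submodule K V → ℕ) (H₀ : Submodule K V) : Submodule K V → ℕ :=
  fun H => if H = H₀ then μ H₀ - 1 else μ H

/-- `θ ∈ α · Der(S)`: every component of `θ` is divisible by `α`. -/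
def divDer (α : Poly K V) (θ : Der K V) : Prop := ∀ i, α ∣ θ i

/-- The Euler multiplicity `μ*` on the restriction `𝒜^{H₀}`: for `Y ∈ 𝒜^{H₀}`,
`μ*(Y)` is the polynomial degree of the distinguished basis element
`θ_Y ∉ α₀·Der(S)` in a homogeneous basis `{θ_Y, ψ_Y, D₃, …, D_ℓ}` of
`D(𝒜_Y, μ_Y)` with `ψ_Y ∈ α₀·Der(S)` and `D₃, …, D_ℓ` of degree `0`. -/
def eulerMult (A : Finset (Submodule K V)) (μ : Submodule K V → ℕ) (H₀ : Submodule K V) :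
    Submodule K ↥H₀ → ℕ := fun Y =>
  sInf {p : ℕ |
    ∃ (b : Basis (Fin (Module.finrank K V)) (Poly K V)
          (derMod K (loc K A (Y.map H₀.subtype)) μ))
      (d : Fin (Module.finrank K V) → ℕ) (j₀ j₁ : Fin (Module.finrank K V)),
        j₀ ≠ j₁ ∧ (∀ j, IsHomogDer K (b j : Der K V) (d j)) ∧
        ¬ divDer K (polyOf K H₀) (b j₀) ∧ divDer K (polyOf K H₀) (b j₁) ∧
        (∀ j, j ≠ j₀ → j ≠ j₁ → d j = 0) ∧ d j₀ = p}

/-- Inductively free (simple) arrangements. -/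
inductive IndFree :
    ∀ (V : Type) [AddCommGroup V] [Module K V] [FiniteDimensional K V],
      Finset (Submodule K V) → Prop
  | empty (V : Type) [AddCommGroup V] [Module K V] [FiniteDimensional K V] :
      IndFree V (∅ : Finset (Submodule K V))
  | step (V : Type) [AddCommGroup V] [Module K V] [FiniteDimensional K V]
      (A : Finset (Submodule K V)) (H₀ : Submodule K V) (hH₀ : H₀ ∈ A)
      (E' E'' : Multiset ℕ)
      (hfree' : FreeExp K (A.erase H₀) (one K) E')
      (hfree'' : FreeExp K (restr K A H₀) (one K) E'')
      (hle : E'' ≤ E')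
      (ih' : IndFree V (A.erase H₀))
      (ih'' : IndFree ↥H₀ (restr K A H₀)) :
      IndFree V A

/-- Inductively free multiarrangements. -/
inductive MIndFree :
    ∀ (V : Type) [AddCommGroup V] [Module K V] [FiniteDimensional K V],
      Finset (Submodule K V) → (Submodule K V → ℕ) → Prop
  | empty (V : Type) [AddCommGroup V] [Module K V] [FiniteDimensional K V]
      (μ : Submodule K V → ℕ) :
      MIndFree V (∅ : Finset (Submodule K V)) μ
  | step (V : Type) [AddCommGroup V] [Module K V] [FiniteDimensional K V]
      (A : Finset (Submodule K V)) (μ : Submodule K V → ℕ)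
      (H₀ : Submodule K V) (hH₀ : H₀ ∈ A) (hμ : 1 ≤ μ H₀)
      (E' E'' : Multiset ℕ)
      (hfree' : FreeExp K (delArr K A μ H₀) (delMult K μ H₀) E')
      (hfree'' : FreeExp K (restr K A H₀) (eulerMult K A μ H₀) E'')
      (hle : E'' ≤ E')
      (ih' : MIndFree V (delArr K A μ H₀) (delMult K μ H₀))
      (ih'' : MIndFree ↥H₀ (restr K A H₀) (eulerMult K A μ H₀)) :
      MIndFree V A μ

/-- Linear isomorphism of arrangements. -/
def ArrIso {V₁ V₂ : Type} [AddCommGroup V₁] [Module K V₁] [AddCommGroup V₂] [Module K V₂]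
    (A₁ : Finset (Submodule K V₁)) (A₂ : Finset (Submodule K V₂)) : Prop :=
  ∃ e : V₁ ≃ₗ[K] V₂, A₂ = A₁.image (Submodule.map (e : V₁ →ₗ[K] V₂))

end Arrangement

namespace Arrangement

/-- A primitive `r`-th root of unity. -/
def zeta (r : ℕ) : ℂ := Complex.exp (2 * Real.pi * Complex.I / r)

/-- The linear form `x_i - ζ^n x_j` on `ℂ^ℓ`. -/
def formIJ (ℓ : ℕ) (i j : Fin ℓ) (r n : ℕ) : Module.Dual ℂ (Fin ℓ → ℂ) :=
  LinearMap.proj i - (zeta r) ^ n • LinearMap.proj j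

/-- The coordinate linear form `x_i` on `ℂ^ℓ`. -/
def coordForm (ℓ : ℕ) (i : Fin ℓ) : Module.Dual ℂ (Fin ℓ → ℂ) :=
  LinearMap.proj i

/-- The intermediate arrangement `𝒜^k_ℓ(r)` of Orlik–Solomon, with defining
polynomial `x₁ ⋯ x_k ∏_{i<j, 0 ≤ n < r} (x_i - ζ^n x_j)`. -/
def interArr (r ℓ k : ℕ) : Finset (Submodule ℂ (Fin ℓ → ℂ)) :=
  ((Finset.univ : Finset (Fin ℓ)).filter fun i : Fin ℓ => (i : ℕ) < k).image
      (fun i => LinearMap.ker (coordForm ℓ i)) ∪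
  ((Finset.univ : Finset (Fin ℓ × Fin ℓ × Fin r)).filter fun t => t.1 < t.2.1).image
      (fun t => LinearMap.ker (formIJ ℓ t.1 t.2.1 r (t.2.2 : ℕ)))

end Arrangement

namespace Arrangement

section Helpers

variable {K : Type} [Field K] {V : Type} [AddCommGroup V] [Module K V] [FiniteDimensional K V]

lemma applyDer_add' (θ ψ : Der K V) (p : Poly K V) :
    applyDer K (θ + ψ) p = applyDer K θ p + applyDer K ψ p := by
  simp [applyDer, add_mul, Finset.sum_add_distrib]

lemma applyDer_sub' (θ ψ : Der K V) (p : Poly K V) :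
    applyDer K (θ - ψ) p = applyDer K θ p - applyDer K ψ p := by
  simp [applyDer, sub_mul, Finset.sum_sub_distrib]

lemma applyDer_smul' (f : Poly K V) (θ : Der K V) (p : Poly K V) :
    applyDer K (f • θ) p = f * applyDer K θ p := by
  simp [applyDer, Finset.mul_sum, mul_assoc]

lemma applyDer_zero' (p : Poly K V) : applyDer K (0 : Der K V) p = 0 := by
  simp [applyDer]

lemma applyDer_sum' {ι : Type} (s : Finset ι) (f : ι → Poly K V) (θ : ι → Der K V)
    (p : Poly K V) :
    applyDer K (∑ j ∈ s, f j • θ j) p = ∑ j ∈ s, f j * applyDer K (θ j) p := by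
  classical
  induction s using Finset.induction with
  | empty => simp [applyDer]
  | insert _ _ h ih =>
      rw [Finset.sum_insert h, applyDer_add', applyDer_smul', ih, Finset.sum_insert h]

/-- The Euler derivation in coordinates. -/
def eulerD : Der K V := fun i => MvPolynomial.X i

lemma pderiv_toPoly (f : Module.Dual K V) (i : bIdx K V) :
    MvPolynomial.pderiv i (toPoly K f) = MvPolynomial.C (f (Basis.ofVectorSpace K V i)) := by
  classical
  rw [toPoly, map_sum]
  rw [Finset.sum_eq_single i]
  · simp
  · intro j _ hj
    simp [MvPolynomial.pderiv_X, Pi.single_apply, hj]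
  · simp

lemma applyDer_eulerD (f : Module.Dual K V) :
    applyDer K (eulerD : Der K V) (toPoly K f) = toPoly K f := by
  rw [applyDer]
  simp_rw [pderiv_toPoly]
  rw [toPoly]
  exact Finset.sum_congr rfl fun i _ => mul_comm _ _

lemma toPoly_isHomogeneous (f : Module.Dual K V) : (toPoly K f).IsHomogeneous 1 :=
  MvPolynomial.IsHomogeneous.sum _ _ _ fun i _ => MvPolynomial.isHomogeneous_C_mul_X _ _

lemma applyDer_isHomogeneous {θ : Der K V} {p : ℕ} (hθ : IsHomogDer K θ p)
    (f : Module.Dual K V) : (applyDer K θ (toPoly K f)).IsHomogeneous p := by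
  rw [applyDer]
  refine MvPolynomial.IsHomogeneous.sum _ _ _ fun i _ => ?_
  rw [pderiv_toPoly]
  simpa using (hθ i).mul (MvPolynomial.isHomogeneous_C _ _)

lemma formOf_ker {H : Submodule K V} (hc : IsCoatom H) :
    LinearMap.ker (formOf K H) = H := by
  have hex : ∃ f : Module.Dual K V, LinearMap.ker f = H := by
    obtain ⟨f, hf0, hf⟩ :=
      Submodule.exists_dual_map_eq_bot_of_lt_top (lt_top_iff_ne_top.2 hc.1) inferInstance
    refine ⟨f, ?_⟩
    have hle : H ≤ LinearMap.ker f := by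
      intro x hx
      have : f x ∈ Submodule.map f H := ⟨x, hx, rfl⟩
      rw [hf] at this
      rw [LinearMap.mem_ker]; exact (Submodule.mem_bot K).1 this
    rcases lt_or_eq_of_le hle with h | h
    · exact absurd (hc.2 _ h) (by simpa [LinearMap.ker_eq_top] using hf0)
    · exact h.symm
  rw [formOf, dif_pos hex]
  exact hex.choose_spec

lemma coeff_toPoly (f : Module.Dual K V) (i : bIdx K V) :
    MvPolynomial.coeff (Finsupp.single i 1) (toPoly K f) = f (Basis.ofVectorSpace K V i) := by
  classical
  rw [toPoly, MvPolynomial.coeff_sum]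
  rw [Finset.sum_eq_single i]
  · simp [MvPolynomial.coeff_C_mul, MvPolynomial.coeff_X]
  · intro j _ hj
    have : ¬ (Finsupp.single j 1 = Finsupp.single i 1) := by
      simp [Finsupp.single_eq_single_iff, hj]
    simp [MvPolynomial.coeff_C_mul, MvPolynomial.coeff_X', this]
  · simp

lemma polyOf_ne_zero {H : Submodule K V} (hc : IsCoatom H) : polyOf K H ≠ 0 := by
  intro h
  have hf : formOf K H = 0 := by
    apply (Basis.ofVectorSpace K V).ext
    intro i
    have := coeff_toPoly (formOf K H) i
    rw [show toPoly K (formOf K H) = 0 from h] at this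
    simp only [MvPolynomial.coeff_zero] at this
    simp only [LinearMap.zero_apply]
    exact this.symm
  have : LinearMap.ker (formOf K H) = ⊤ := by rw [hf]; exact LinearMap.ker_zero
  rw [formOf_ker hc] at this
  exact hc.1 this

lemma homog_mul_component {α q : Poly K V} {e n : ℕ} (hα : α.IsHomogeneous e)
    (h : (α * q).IsHomogeneous n) :
    α * q = if e ≤ n then α * MvPolynomial.homogeneousComponent (n - e) q else 0 := by
  classical
  have hsum : α * q = ∑ k ∈ Finset.range (q.totalDegree + 1),
      α * MvPolynomial.homogeneousComponent k q := by
    rw [← Finset.mul_sum, MvPolynomial.sum_homogeneousComponent]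
  have step1 : α * q = MvPolynomial.homogeneousComponent n (α * q) := by
    rw [MvPolynomial.homogeneousComponent_of_mem h, if_pos rfl]
  calc α * q = MvPolynomial.homogeneousComponent n (α * q) := step1
    _ = ∑ k ∈ Finset.range (q.totalDegree + 1),
          MvPolynomial.homogeneousComponent n (α * MvPolynomial.homogeneousComponent k q) := by
        conv_lhs => rw [hsum, map_sum]
    _ = ∑ k ∈ Finset.range (q.totalDegree + 1),
          if n = e + k then α * MvPolynomial.homogeneousComponent k q else 0 := by
        refine Finset.sum_congr rfl fun k _ => ?_
        exact MvPolynomial.homogeneousComponent_of_mem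
          (hα.mul (MvPolynomial.homogeneousComponent_isHomogeneous k q))
    _ = if e ≤ n then α * MvPolynomial.homogeneousComponent (n - e) q else 0 := by
        by_cases hen : e ≤ n
        · rw [if_pos hen]
          have hcond : ∀ k, (n = e + k) = (k = n - e) := by
            intro k; apply propext; omega
          simp_rw [hcond]
          rw [Finset.sum_ite_eq' (Finset.range (q.totalDegree + 1)) (n - e)]
          by_cases hmem : n - e ∈ Finset.range (q.totalDegree + 1)
          · rw [if_pos hmem]
          · rw [if_neg hmem]
            have : MvPolynomial.homogeneousComponent (n - e) q = 0 := by
              apply MvPolynomial.homogeneousComponent_eq_zero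
              simp only [Finset.mem_range, not_lt] at hmem
              omega
            rw [this, mul_zero]
        · rw [if_neg hen]
          refine Finset.sum_eq_zero fun k _ => ?_
          rw [if_neg (by omega)]

lemma constantCoeff_eq_zero_of_isHomogeneous {g : Poly K V} {k : ℕ}
    (hg : g.IsHomogeneous k) (hk : k ≠ 0) : MvPolynomial.constantCoeff g = 0 := by
  rw [MvPolynomial.constantCoeff_eq]
  exact hg.coeff_eq_zero (by simpa using hk.symm)

lemma eq_C_of_isHomogeneous_zero {g : Poly K V} (hg : g.IsHomogeneous 0) :
    g = MvPolynomial.C (MvPolynomial.constantCoeff g) := by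
  have h1 : MvPolynomial.homogeneousComponent 0 g = g := by
    rw [MvPolynomial.homogeneousComponent_of_mem hg, if_pos rfl]
  conv_lhs => rw [← h1]
  rw [MvPolynomial.homogeneousComponent_zero, MvPolynomial.constantCoeff_eq]

end Helpers

section Transfer

variable {K : Type} [Field K] {V : Type} [AddCommGroup V] [Module K V] [FiniteDimensional K V]
variable {A : Finset (Submodule K V)} {H₀ : Submodule K V}

lemma polyOf_isHomogeneous (H : Submodule K V) : (polyOf K H).IsHomogeneous 1 :=
  toPoly_isHomogeneous _

lemma mem_derMod_iff {μ : Submodule K V → ℕ} {θ : Der K V} :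
    θ ∈ derMod K A μ ↔ ∀ H ∈ A, (polyOf K H) ^ (μ H) ∣ applyDer K θ (polyOf K H) :=
  Iff.rfl

lemma mem_derMod_conc_iff {e : ℕ} (he : 1 ≤ e) (hH₀ : H₀ ∈ A) {θ : Der K V} :
    θ ∈ derMod K A (concMult K H₀ e) ↔
      ((∀ H ∈ A, polyOf K H ∣ applyDer K θ (polyOf K H)) ∧
        polyOf K H₀ ^ e ∣ applyDer K θ (polyOf K H₀)) := by
  constructor
  · intro h
    have hH0 := h H₀ hH₀
    simp only [concMult, if_pos rfl] at hH0
    refine ⟨fun H hH => ?_, hH0⟩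
    by_cases hH' : H = H₀
    · subst hH'
      exact dvd_trans (dvd_pow_self _ (Nat.one_le_iff_ne_zero.mp he)) hH0
    · have h2 := h H hH
      simp only [concMult, if_neg hH', pow_one] at h2
      exact h2
  · rintro ⟨h1, h2⟩ H hH
    by_cases hH' : H = H₀
    · subst hH'
      simp only [concMult, if_pos rfl]
      exact h2
    · simp only [concMult, if_neg hH', pow_one]
      exact h1 H hH

lemma coe_submodule_sum {ι : Type} {M : Type} [AddCommGroup M] [Module (Poly K V) M]
    {N : Submodule (Poly K V) M} (s : Finset ι) (f : ι → Poly K V) (x : ι → N) :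
    ((∑ i ∈ s, f i • x i : N) : M) = ∑ i ∈ s, f i • (x i : M) := by
  have := map_sum N.subtype (fun i => f i • x i) s
  simpa using this

set_option maxHeartbeats 2000000 in
lemma transfer (hhyp : ∀ H ∈ A, IsCoatom H) (hH₀ : H₀ ∈ A)
    {n : ℕ} {e e' : ℕ} (he : 1 ≤ e) (he' : 1 ≤ e')
    (b : Basis (Fin n) (Poly K V) (derMod K A (concMult K H₀ e)))
    (d : Fin n → ℕ) (hb : ∀ j, IsHomogDer K (b j : Der K V) (d j)) :
    ∃ j₀ : Fin n, d j₀ = e ∧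
      ∃ b' : Basis (Fin n) (Poly K V) (derMod K A (concMult K H₀ e')),
        ∀ j, IsHomogDer K (b' j : Der K V) (Function.update d j₀ e' j) := by
  classical
  have hα0 : polyOf K H₀ ≠ 0 := polyOf_ne_zero (hhyp H₀ hH₀)
  have hαh : (polyOf K H₀).IsHomogeneous 1 := polyOf_isHomogeneous H₀
  have hαe : ((polyOf K H₀) ^ e).IsHomogeneous e := by simpa using hαh.pow e
  have hαpow0 : (polyOf K H₀) ^ e ≠ 0 := pow_ne_zero _ hα0
  -- the rescaled Euler derivations
  have happ : ∀ (m : ℕ) (H : Submodule K V),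
      applyDer K ((polyOf K H₀) ^ (m - 1) • eulerD : Der K V) (polyOf K H)
        = (polyOf K H₀) ^ (m - 1) * polyOf K H := by
    intro m H
    rw [applyDer_smul']
    congr 1
    exact applyDer_eulerD (formOf K H)
  have heuler : ∀ (m : ℕ), 1 ≤ m →
      (((polyOf K H₀) ^ (m - 1) • eulerD : Der K V) ∈ derMod K A (concMult K H₀ m)) ∧
        applyDer K ((polyOf K H₀) ^ (m - 1) • eulerD : Der K V) (polyOf K H₀)
          = (polyOf K H₀) ^ m := by
    intro m hm
    have h2 : applyDer K ((polyOf K H₀) ^ (m - 1) • eulerD : Der K V) (polyOf K H₀)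
        = (polyOf K H₀) ^ m := by
      rw [happ, ← pow_succ]
      congr 1
      omega
    refine ⟨(mem_derMod_conc_iff hm hH₀).2 ⟨fun H hH => ?_, ?_⟩, h2⟩
    · rw [happ]; exact dvd_mul_left _ _
    · rw [h2]
  -- quotients of the basis elements
  have hmem : ∀ j, ((b j : Der K V) ∈ derMod K A (concMult K H₀ e)) := fun j => (b j).2
  have hdvd : ∀ j, ∃ w, applyDer K (b j : Der K V) (polyOf K H₀) = (polyOf K H₀) ^ e * w :=
    fun j => ((mem_derMod_conc_iff he hH₀).1 (hmem j)).2
  choose q hq using hdvd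
  have habj : ∀ j, (applyDer K (b j : Der K V) (polyOf K H₀)).IsHomogeneous (d j) :=
    fun j => applyDer_isHomogeneous (hb j) _
  set g : Fin n → Poly K V := fun j => MvPolynomial.homogeneousComponent (d j - e) (q j)
    with hg_def
  have hgh : ∀ j, (g j).IsHomogeneous (d j - e) :=
    fun j => MvPolynomial.homogeneousComponent_isHomogeneous _ _
  have hkey : ∀ j, (polyOf K H₀) ^ e * q j
      = if e ≤ d j then (polyOf K H₀) ^ e * g j else 0 := by
    intro j
    have h3 := homog_mul_component hαe (by rw [← hq j]; exact habj j)
    simpa [hg_def] using h3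
  have hq0 : ∀ j, ¬ e ≤ d j → q j = 0 := by
    intro j hj
    have h0 : (polyOf K H₀) ^ e * q j = 0 := by rw [hkey j, if_neg hj]
    rcases mul_eq_zero.1 h0 with h | h
    · exact absurd h hαpow0
    · exact h
  have hgmul : ∀ j, (polyOf K H₀) ^ e * g j = applyDer K (b j : Der K V) (polyOf K H₀) := by
    intro j
    by_cases hj : e ≤ d j
    · rw [hq j, hkey j, if_pos hj]
    · have h4 := hq0 j hj
      have hg0 : g j = 0 := by rw [hg_def]; simp [h4]
      rw [hg0, mul_zero, hq j, h4, mul_zero]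
  have hglt : ∀ j, d j < e → g j = 0 := by
    intro j hj
    have h4 := hq0 j (by omega)
    rw [hg_def]; simp [h4]
  -- expand the Euler element in the basis
  obtain ⟨hΘmem, hΘα⟩ := heuler e he
  have hrepr : ∑ j, (b.repr ⟨_, hΘmem⟩) j • (b j : Der K V)
      = ((polyOf K H₀) ^ (e - 1) • eulerD : Der K V) := by
    have h5 := b.sum_repr ⟨_, hΘmem⟩
    have h6 := congrArg (Submodule.subtype _) h5
    simpa only [map_sum, map_smul, Submodule.subtype_apply] using h6
  set c : Fin n → Poly K V := fun j => (b.repr ⟨_, hΘmem⟩) j with hc_def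
  have hsum1 : ∑ j, c j * g j = 1 := by
    have h1 : applyDer K (∑ j, c j • (b j : Der K V)) (polyOf K H₀) = (polyOf K H₀) ^ e := by
      rw [hrepr, hΘα]
    rw [applyDer_sum'] at h1
    simp_rw [← hgmul] at h1
    have h2 : ∑ j, c j * ((polyOf K H₀) ^ e * g j)
        = (polyOf K H₀) ^ e * ∑ j, c j * g j := by
      rw [Finset.mul_sum]
      exact Finset.sum_congr rfl fun j _ => by ring
    rw [h2] at h1
    apply mul_left_cancel₀ hαpow0
    rw [h1, mul_one]
  -- find the distinguished index
  have hccsum : ∑ j, MvPolynomial.constantCoeff (c j * g j) = 1 := by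
    rw [← map_sum, hsum1, map_one]
  obtain ⟨j₀, -, hj₀⟩ := Finset.exists_ne_zero_of_sum_ne_zero
    (s := Finset.univ) (f := fun j => MvPolynomial.constantCoeff (c j * g j))
    (by rw [hccsum]; exact one_ne_zero)
  have hgc : MvPolynomial.constantCoeff (g j₀) ≠ 0 := by
    intro h
    rw [map_mul, h, mul_zero] at hj₀
    exact hj₀ rfl
  have hd0 : d j₀ = e := by
    by_contra hne
    rcases lt_or_gt_of_ne hne with h | h
    · exact hgc (by rw [hglt j₀ h]; exact map_zero _)
    · exact hgc (constantCoeff_eq_zero_of_isHomogeneous (hgh j₀) (by omega))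
  have hgC : g j₀ = MvPolynomial.C (MvPolynomial.constantCoeff (g j₀)) := by
    have h7 := hgh j₀
    rw [hd0, Nat.sub_self] at h7
    exact eq_C_of_isHomogeneous_zero h7
  set a : K := MvPolynomial.constantCoeff (g j₀) with ha_def
  have hCC : MvPolynomial.C (a⁻¹) * MvPolynomial.C a = (1 : Poly K V) := by
    rw [← MvPolynomial.C_mul, inv_mul_cancel₀ hgc, MvPolynomial.C_1]
  -- the corrected family
  set hcoef : Fin n → Poly K V := fun j => MvPolynomial.C a⁻¹ * g j with hh_def
  set β : Fin n → Der K V :=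
    fun j => (b j : Der K V) - hcoef j • (b j₀ : Der K V) with hβ_def
  have hβα : ∀ j, applyDer K (β j) (polyOf K H₀) = 0 := by
    intro j
    simp only [hβ_def]
    rw [applyDer_sub', applyDer_smul', ← hgmul, ← hgmul, hgC, hh_def]
    calc (polyOf K H₀) ^ e * g j
          - MvPolynomial.C a⁻¹ * g j * ((polyOf K H₀) ^ e * MvPolynomial.C a)
        = (1 - MvPolynomial.C a⁻¹ * MvPolynomial.C a) * ((polyOf K H₀) ^ e * g j) := by ring
      _ = 0 := by rw [hCC, sub_self, zero_mul]
  have hβmem : ∀ j, β j ∈ derMod K A (concMult K H₀ e') := by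
    intro j
    rw [mem_derMod_conc_iff he' hH₀]
    constructor
    · intro H hH
      simp only [hβ_def]
      rw [applyDer_sub', applyDer_smul']
      exact dvd_sub (((mem_derMod_conc_iff he hH₀).1 (hmem j)).1 H hH)
        (Dvd.dvd.mul_left (((mem_derMod_conc_iff he hH₀).1 (hmem j₀)).1 H hH) _)
    · rw [hβα j]
      exact dvd_zero _
  obtain ⟨hΘ'mem, hΘ'α⟩ := heuler e' he'
  set fam : Fin n → (derMod K A (concMult K H₀ e')) := fun j =>
    if j = j₀ then ⟨(polyOf K H₀) ^ (e' - 1) • eulerD, hΘ'mem⟩ else ⟨β j, hβmem j⟩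
    with hfam_def
  have hfam_coe_j₀ : (fam j₀ : Der K V) = (polyOf K H₀) ^ (e' - 1) • eulerD := by
    simp only [hfam_def, if_pos rfl]
  have hfam_coe : ∀ j, j ≠ j₀ → (fam j : Der K V) = β j := by
    intro j hj
    simp only [hfam_def, if_neg hj]
  have hfamα : ∀ j, applyDer K (fam j : Der K V) (polyOf K H₀)
      = if j = j₀ then (polyOf K H₀) ^ e' else 0 := by
    intro j
    by_cases hj : j = j₀
    · subst hj; rw [hfam_coe_j₀, if_pos rfl, hΘ'α]
    · rw [hfam_coe j hj, if_neg hj, hβα]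
  -- linear independence
  have hli : LinearIndependent (Poly K V) fam := by
    rw [Fintype.linearIndependent_iff]
    intro f hf
    have hf' : ∑ j, f j • (fam j : Der K V) = 0 := by
      have h2 := congrArg (Submodule.subtype _) hf
      simpa [map_sum] using h2
    have hfj₀ : f j₀ = 0 := by
      have h1 := congrArg (fun θ : Der K V => applyDer K θ (polyOf K H₀)) hf'
      simp only [applyDer_zero'] at h1
      rw [applyDer_sum'] at h1
      simp_rw [hfamα] at h1
      simp only [mul_ite, mul_zero] at h1
      rw [Finset.sum_ite_eq' Finset.univ j₀ (fun j => f j * (polyOf K H₀) ^ e')] at h1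
      simp only [Finset.mem_univ, if_true] at h1
      rcases mul_eq_zero.1 h1 with h | h
      · exact h
      · exact absurd h (pow_ne_zero _ hα0)
    intro j
    by_cases hj : j = j₀
    · rw [hj]; exact hfj₀
    · set F : Fin n → Poly K V := fun i =>
        if i = j₀ then -(∑ k ∈ Finset.univ.erase j₀, f k * hcoef k) else f i with hF_def
      have h4 : ∑ i ∈ Finset.univ.erase j₀, f i • (β i) = 0 := by
        calc ∑ i ∈ Finset.univ.erase j₀, f i • β i
            = ∑ i ∈ Finset.univ.erase j₀, f i • (fam i : Der K V) := by
              refine Finset.sum_congr rfl fun i hi => ?_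
              rw [hfam_coe i (Finset.mem_erase.1 hi).1]
          _ = f j₀ • (fam j₀ : Der K V)
              + ∑ i ∈ Finset.univ.erase j₀, f i • (fam i : Der K V) := by
              rw [hfj₀, zero_smul, zero_add]
          _ = ∑ j, f j • (fam j : Der K V) :=
              Finset.add_sum_erase _ _ (Finset.mem_univ j₀)
          _ = 0 := hf'
      have h7 : ∑ i ∈ Finset.univ.erase j₀, f i • (b i : Der K V)
          = (∑ i ∈ Finset.univ.erase j₀, f i * hcoef i) • (b j₀ : Der K V) := by
        have h5 := h4
        simp only [hβ_def, smul_sub, Finset.sum_sub_distrib, smul_smul] at h5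
        rw [sub_eq_zero] at h5
        rw [h5, ← Finset.sum_smul]
      have hcoeDer : ∑ i, F i • (b i : Der K V) = 0 := by
        rw [← Finset.add_sum_erase Finset.univ _ (Finset.mem_univ j₀)]
        have h3 : ∑ i ∈ Finset.univ.erase j₀, F i • (b i : Der K V)
            = ∑ i ∈ Finset.univ.erase j₀, f i • (b i : Der K V) := by
          refine Finset.sum_congr rfl fun i hi => ?_
          simp only [hF_def]
          rw [if_neg (Finset.mem_erase.1 hi).1]
        rw [h3, h7]
        simp only [hF_def, if_pos rfl]
        rw [neg_smul, neg_add_cancel]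
      have hsubmod : (∑ i, F i • b i : derMod K A (concMult K H₀ e)) = 0 := by
        apply Submodule.injective_subtype (derMod K A (concMult K H₀ e))
        simpa only [map_sum, map_smul, map_zero, Submodule.subtype_apply] using hcoeDer
      have hF0 := (Fintype.linearIndependent_iff.1 b.linearIndependent) F hsubmod
      have := hF0 j
      simp only [hF_def, if_neg hj] at this
      exact this
  -- spanning
  have hsp : ⊤ ≤ Submodule.span (Poly K V) (Set.range fam) := by
    rintro ⟨θ, hθ⟩ -
    obtain ⟨hθ1, hθ2⟩ := (mem_derMod_conc_iff he' hH₀).1 hθ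
    obtain ⟨w, hw⟩ := hθ2
    set ψ : Der K V := θ - w • ((polyOf K H₀) ^ (e' - 1) • eulerD) with hψ_def
    have hψα : applyDer K ψ (polyOf K H₀) = 0 := by
      simp only [hψ_def]
      rw [applyDer_sub', applyDer_smul', hΘ'α, hw]
      ring
    have hψmem : ψ ∈ derMod K A (concMult K H₀ e) := by
      rw [mem_derMod_conc_iff he hH₀]
      refine ⟨fun H hH => ?_, ?_⟩
      · simp only [hψ_def]
        rw [applyDer_sub', applyDer_smul', happ]
        exact dvd_sub (hθ1 H hH)
          (Dvd.dvd.mul_left (dvd_mul_left _ _) _)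
      · rw [hψα]
        exact dvd_zero _
    set r : Fin n → Poly K V := fun j => (b.repr ⟨ψ, hψmem⟩) j with hr_def
    have hrepr2 : ∑ j, r j • (b j : Der K V) = ψ := by
      have h5 := b.sum_repr ⟨ψ, hψmem⟩
      have h6 := congrArg (Submodule.subtype _) h5
      simpa only [map_sum, map_smul, Submodule.subtype_apply] using h6
    have hrg : ∑ j, r j * g j = 0 := by
      have h1 : applyDer K (∑ j, r j • (b j : Der K V)) (polyOf K H₀) = 0 := by
        rw [hrepr2, hψα]
      rw [applyDer_sum'] at h1
      simp_rw [← hgmul] at h1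
      have h2 : ∑ j, r j * ((polyOf K H₀) ^ e * g j)
          = (polyOf K H₀) ^ e * ∑ j, r j * g j := by
        rw [Finset.mul_sum]
        exact Finset.sum_congr rfl fun j _ => by ring
      rw [h2] at h1
      apply mul_left_cancel₀ hαpow0
      rw [h1, mul_zero]
    have hFzero : ∑ i ∈ Finset.univ.erase j₀, r i * hcoef i = - r j₀ := by
      have h3 : ∑ i ∈ Finset.univ.erase j₀, r i * hcoef i
          = MvPolynomial.C a⁻¹ * ∑ i ∈ Finset.univ.erase j₀, r i * g i := by
        rw [Finset.mul_sum]
        refine Finset.sum_congr rfl fun i _ => ?_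
        simp only [hh_def]
        ring
      have h5 : r j₀ * g j₀ + ∑ i ∈ Finset.univ.erase j₀, r i * g i = 0 := by
        rw [Finset.add_sum_erase Finset.univ (fun i => r i * g i) (Finset.mem_univ j₀)]
        exact hrg
      have h4 : ∑ i ∈ Finset.univ.erase j₀, r i * g i = -(r j₀ * MvPolynomial.C a) := by
        rw [← hgC]
        exact eq_neg_of_add_eq_zero_right h5
      rw [h3, h4]
      calc MvPolynomial.C a⁻¹ * -(r j₀ * MvPolynomial.C a)
          = -((MvPolynomial.C a⁻¹ * MvPolynomial.C a) * r j₀) := by ring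
        _ = - r j₀ := by rw [hCC, one_mul]
    have hψβ : ψ = ∑ i ∈ Finset.univ.erase j₀, r i • β i := by
      have hexp : ∑ i ∈ Finset.univ.erase j₀, r i • β i
          = ∑ i ∈ Finset.univ.erase j₀, r i • (b i : Der K V)
            - (∑ i ∈ Finset.univ.erase j₀, r i * hcoef i) • (b j₀ : Der K V) := by
        simp only [hβ_def, smul_sub, Finset.sum_sub_distrib, smul_smul, Finset.sum_smul]
      rw [hexp, hFzero, neg_smul, sub_neg_eq_add, ← hrepr2,
        ← Finset.add_sum_erase Finset.univ _ (Finset.mem_univ j₀), add_comm]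
    have hθdecomp : (⟨θ, hθ⟩ : derMod K A (concMult K H₀ e'))
        = w • fam j₀ + ∑ i ∈ Finset.univ.erase j₀, r i • fam i := by
      apply Submodule.injective_subtype (derMod K A (concMult K H₀ e'))
      simp only [map_add, map_smul, map_sum, Submodule.subtype_apply]
      rw [hfam_coe_j₀]
      have h8 : ∑ i ∈ Finset.univ.erase j₀, r i • (fam i : Der K V)
          = ∑ i ∈ Finset.univ.erase j₀, r i • β i :=
        Finset.sum_congr rfl fun i hi => by rw [hfam_coe i (Finset.mem_erase.1 hi).1]
      rw [h8, ← hψβ]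
      simp only [hψ_def]
      abel
    rw [hθdecomp]
    exact Submodule.add_mem _
      (Submodule.smul_mem _ _ (Submodule.subset_span ⟨j₀, rfl⟩))
      (Submodule.sum_mem _ fun i _ => Submodule.smul_mem _ _ (Submodule.subset_span ⟨i, rfl⟩))
  -- assemble
  refine ⟨j₀, hd0, Module.Basis.mk hli hsp, fun j => ?_⟩
  have hbm : ((Module.Basis.mk hli hsp) j : Der K V) = (fam j : Der K V) := by
    rw [Module.Basis.mk_apply]
  rw [hbm]
  by_cases hj : j = j₀
  · subst hj
    rw [Function.update_self, hfam_coe_j₀]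
    intro i
    have h8 : 1 * (e' - 1) + 1 = e' := by omega
    have h9 := (hαh.pow (e' - 1)).mul (MvPolynomial.isHomogeneous_X K i)
    rw [h8] at h9
    simpa [eulerD] using h9
  · rw [Function.update_of_ne hj, hfam_coe j hj]
    intro i
    simp only [hβ_def, Pi.sub_apply, Pi.smul_apply, smul_eq_mul]
    refine MvPolynomial.IsHomogeneous.sub ((hb j) i) ?_
    by_cases hde : e ≤ d j
    · have h9 : (hcoef j).IsHomogeneous (d j - e) := by
        simp only [hh_def]
        exact (hgh j).C_mul _
      have h10 := h9.mul ((hb j₀) i)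
      rw [hd0, show d j - e + e = d j from by omega] at h10
      exact h10
    · have h10 : g j = 0 := hglt j (by omega)
      have h11 : hcoef j = 0 := by simp only [hh_def]; rw [h10, mul_zero]
      rw [h11, zero_mul]
      exact MvPolynomial.isHomogeneous_zero _ _ _

lemma multiset_map_self {n : ℕ} (d : Fin n → ℕ) (j₀ : Fin n) :
    Multiset.map d Finset.univ.val = d j₀ ::ₘ Multiset.map d (Finset.univ.val.erase j₀) := by
  conv_lhs => rw [← Multiset.cons_erase (show j₀ ∈ (Finset.univ : Finset (Fin n)).val from Finset.mem_univ j₀)]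
  rw [Multiset.map_cons]

lemma multiset_map_update {n : ℕ} (d : Fin n → ℕ) (j₀ : Fin n) (v : ℕ) :
    Multiset.map (Function.update d j₀ v) Finset.univ.val
      = v ::ₘ Multiset.map d (Finset.univ.val.erase j₀) := by
  conv_lhs => rw [← Multiset.cons_erase (show j₀ ∈ (Finset.univ : Finset (Fin n)).val from Finset.mem_univ j₀)]
  rw [Multiset.map_cons, Function.update_self]
  congr 1
  apply Multiset.map_congr rfl
  intro x hx
  have hnd : (Finset.univ.val : Multiset (Fin n)).Nodup := Finset.univ.nodup
  exact Function.update_of_ne ((hnd.mem_erase_iff.1 hx).1) _ _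

end Transfer

/-- An arrangement `𝒜` is free with exponents `{1, e₂, …, e_ℓ}` if and only if the
multiarrangement `(𝒜, δ)` with multiplicity concentrated at `H₀ ∈ 𝒜` is free with
exponents `{m₀, e₂, …, e_ℓ}`. -/
theorem free_iff_concentrated_free
    {K : Type} [Field K] {V : Type} [AddCommGroup V] [Module K V] [FiniteDimensional K V]
    (A : Finset (Submodule K V)) (hhyp : ∀ H ∈ A, IsCoatom H)
    (H₀ : Submodule K V) (hH₀ : H₀ ∈ A) (m₀ : ℕ) (hm₀ : 1 ≤ m₀) (E : Multiset ℕ) :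
    FreeExp K A (one K) (1 ::ₘ E) ↔ FreeExp K A (concMult K H₀ m₀) (m₀ ::ₘ E) := by
  have hone : (one K : Submodule K V → ℕ) = concMult K H₀ 1 := by
    funext H
    simp [one, concMult]
  rw [show (one K : Submodule K V → ℕ) = concMult K H₀ 1 from hone]
  constructor
  · rintro ⟨b, d, hb, hE⟩
    obtain ⟨j₀, hd0, b', hb'⟩ := transfer hhyp hH₀ le_rfl hm₀ b d hb
    refine ⟨b', Function.update d j₀ m₀, hb', ?_⟩
    rw [multiset_map_update]
    have h1 : (1 : ℕ) ::ₘ E = 1 ::ₘ Multiset.map d (Finset.univ.val.erase j₀) := by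
      rw [hE, multiset_map_self d j₀, hd0]
    rw [(Multiset.cons_inj_right (1 : ℕ)).1 h1]
  · rintro ⟨b, d, hb, hE⟩
    obtain ⟨j₀, hd0, b', hb'⟩ := transfer hhyp hH₀ hm₀ le_rfl b d hb
    refine ⟨b', Function.update d j₀ 1, hb', ?_⟩
    rw [multiset_map_update]
    have h1 : (m₀ : ℕ) ::ₘ E = m₀ ::ₘ Multiset.map d (Finset.univ.val.erase j₀) := by
      rw [hE, multiset_map_self d j₀, hd0]
    rw [(Multiset.cons_inj_right (m₀ : ℕ)).1 h1]

end Arrangement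
end
end

section
/- Let 𝒜 = 𝒜^k_ℓ(r) with r ≥ 2, ℓ ≥ 3, 1 ≤ k ≤ ℓ − 1, and H = ker(x_i − ζ x_j) with 1 ≤ i < j ≤ k. Then the restriction 𝒜^H is linearly isomorphic to 𝒜^{k−1}_{ℓ−1}(r). -/
open Classical MvPolynomial Module
open scoped Classical

noncomputable section

namespace Arrangement

section Aux

/-! ### Auxiliary constructions for the restriction theorem -/

/-- Insert-skip embedding `Fin (ℓ-1) → Fin ℓ` avoiding `i`. -/
def emb (ℓ : ℕ) (i : Fin ℓ) (p : Fin (ℓ - 1)) : Fin ℓ :=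
  if (p : ℕ) < (i : ℕ) then ⟨p, by have := p.2; omega⟩
  else ⟨(p : ℕ) + 1, by have := p.2; omega⟩

/-- Deletion map `Fin ℓ → Fin (ℓ-1)` collapsing at `i`. -/
def del (ℓ : ℕ) (hℓ : 2 ≤ ℓ) (i : Fin ℓ) (m : Fin ℓ) : Fin (ℓ - 1) :=
  if h : (m : ℕ) < (i : ℕ) then ⟨m, by have := i.2; omega⟩
  else ⟨(m : ℕ) - 1, by have := m.2; omega⟩

lemma emb_val (ℓ : ℕ) (i : Fin ℓ) (p : Fin (ℓ - 1)) :
    ((emb ℓ i p : Fin ℓ) : ℕ) = if (p : ℕ) < (i : ℕ) then (p : ℕ) else (p : ℕ) + 1 := by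
  unfold emb; split_ifs <;> rfl

lemma del_val (ℓ : ℕ) (hℓ : 2 ≤ ℓ) (i m : Fin ℓ) :
    ((del ℓ hℓ i m : Fin (ℓ - 1)) : ℕ) =
      if (m : ℕ) < (i : ℕ) then (m : ℕ) else (m : ℕ) - 1 := by
  unfold del; split_ifs <;> rfl

lemma emb_ne (ℓ : ℕ) (i : Fin ℓ) (p : Fin (ℓ - 1)) : emb ℓ i p ≠ i := by
  have h := emb_val ℓ i p
  intro hc
  rw [hc] at h
  split_ifs at h <;> omega

lemma del_emb (ℓ : ℕ) (hℓ : 2 ≤ ℓ) (i : Fin ℓ) (p : Fin (ℓ - 1)) :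
    del ℓ hℓ i (emb ℓ i p) = p := by
  have h1 := emb_val ℓ i p
  have h2 := del_val ℓ hℓ i (emb ℓ i p)
  apply Fin.ext
  rw [h2]
  split_ifs at h1 ⊢ <;> omega

lemma emb_del (ℓ : ℕ) (hℓ : 2 ≤ ℓ) (i m : Fin ℓ) (hm : m ≠ i) :
    emb ℓ i (del ℓ hℓ i m) = m := by
  have hm' : (m : ℕ) ≠ (i : ℕ) := fun h => hm (Fin.ext h)
  have h1 := del_val ℓ hℓ i m
  have h2 := emb_val ℓ i (del ℓ hℓ i m)
  apply Fin.ext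
  rw [h2]
  have := m.2
  split_ifs at h1 ⊢ <;> omega

lemma emb_lt (ℓ : ℕ) (i : Fin ℓ) (p q : Fin (ℓ - 1)) (h : p < q) :
    emb ℓ i p < emb ℓ i q := by
  have h1 := emb_val ℓ i p
  have h2 := emb_val ℓ i q
  have h' : (p : ℕ) < (q : ℕ) := h
  rw [Fin.lt_def]
  rw [h1, h2]
  split_ifs <;> omega

lemma del_lt (ℓ : ℕ) (hℓ : 2 ≤ ℓ) (i m m' : Fin ℓ) (h : m < m')
    (hm : m ≠ i) (hm' : m' ≠ i) : del ℓ hℓ i m < del ℓ hℓ i m' := by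
  have h1 := del_val ℓ hℓ i m
  have h2 := del_val ℓ hℓ i m'
  have h' : (m : ℕ) < (m' : ℕ) := h
  have hmv : (m : ℕ) ≠ (i : ℕ) := fun hh => hm (Fin.ext hh)
  have hmv' : (m' : ℕ) ≠ (i : ℕ) := fun hh => hm' (Fin.ext hh)
  rw [Fin.lt_def, h1, h2]
  split_ifs <;> omega

/-- The section `Fin (ℓ-1) → ℂ → Fin ℓ → ℂ` landing in `ker (x_i - ζ x_j)`. -/
def Smap (r ℓ : ℕ) (hℓ : 2 ≤ ℓ) (i j : Fin ℓ) :
    (Fin (ℓ - 1) → ℂ) →ₗ[ℂ] (Fin ℓ → ℂ) :=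
  LinearMap.pi fun m =>
    if m = i then zeta r • LinearMap.proj (del ℓ hℓ i j) else LinearMap.proj (del ℓ hℓ i m)

/-- The coordinate deletion map. -/
def Rmap (ℓ : ℕ) (i : Fin ℓ) : (Fin ℓ → ℂ) →ₗ[ℂ] (Fin (ℓ - 1) → ℂ) :=
  LinearMap.pi fun p => LinearMap.proj (emb ℓ i p)

lemma Smap_apply_ne (r ℓ : ℕ) (hℓ : 2 ≤ ℓ) (i j : Fin ℓ) (y : Fin (ℓ - 1) → ℂ)
    (m : Fin ℓ) (hm : m ≠ i) : Smap r ℓ hℓ i j y m = y (del ℓ hℓ i m) := by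
  simp [Smap, LinearMap.pi_apply, hm]

lemma Smap_apply_i (r ℓ : ℕ) (hℓ : 2 ≤ ℓ) (i j : Fin ℓ) (y : Fin (ℓ - 1) → ℂ) :
    Smap r ℓ hℓ i j y i = zeta r * y (del ℓ hℓ i j) := by
  simp [Smap, LinearMap.pi_apply]

lemma Rmap_apply (ℓ : ℕ) (i : Fin ℓ) (x : Fin ℓ → ℂ) (p : Fin (ℓ - 1)) :
    Rmap ℓ i x p = x (emb ℓ i p) := by
  simp [Rmap, LinearMap.pi_apply]

lemma formIJ_apply (ℓ : ℕ) (p q : Fin ℓ) (r n : ℕ) (x : Fin ℓ → ℂ) :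
    formIJ ℓ p q r n x = x p - zeta r ^ n * x q := by
  simp [formIJ]

lemma coordForm_apply (ℓ : ℕ) (p : Fin ℓ) (x : Fin ℓ → ℂ) :
    coordForm ℓ p x = x p := by
  simp [coordForm]

lemma Smap_mem (r ℓ : ℕ) (hℓ : 2 ≤ ℓ) (i j : Fin ℓ) (hij : i ≠ j) (y : Fin (ℓ - 1) → ℂ) :
    Smap r ℓ hℓ i j y ∈ LinearMap.ker (formIJ ℓ i j r 1) := by
  rw [LinearMap.mem_ker, formIJ_apply, Smap_apply_i,
    Smap_apply_ne r ℓ hℓ i j y j (Ne.symm hij)]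
  ring

lemma RS (r ℓ : ℕ) (hℓ : 2 ≤ ℓ) (i j : Fin ℓ) (y : Fin (ℓ - 1) → ℂ) :
    Rmap ℓ i (Smap r ℓ hℓ i j y) = y := by
  funext p
  rw [Rmap_apply, Smap_apply_ne r ℓ hℓ i j y _ (emb_ne ℓ i p), del_emb]

lemma SR (r ℓ : ℕ) (hℓ : 2 ≤ ℓ) (i j : Fin ℓ) (hij : i ≠ j) (x : Fin ℓ → ℂ)
    (hx : x ∈ LinearMap.ker (formIJ ℓ i j r 1)) :
    Smap r ℓ hℓ i j (Rmap ℓ i x) = x := by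
  rw [LinearMap.mem_ker, formIJ_apply, pow_one, sub_eq_zero] at hx
  funext m
  by_cases hm : m = i
  · rw [hm, Smap_apply_i, Rmap_apply, emb_del ℓ hℓ i j (Ne.symm hij), hx]
  · rw [Smap_apply_ne r ℓ hℓ i j _ m hm, Rmap_apply, emb_del ℓ hℓ i m hm]

/-- The linear equivalence between `ker (x_i - ζ x_j)` and `ℂ^{ℓ-1}`. -/
def equivH (r ℓ : ℕ) (hℓ : 2 ≤ ℓ) (i j : Fin ℓ) (hij : i ≠ j) :
    ↥(LinearMap.ker (formIJ ℓ i j r 1)) ≃ₗ[ℂ] (Fin (ℓ - 1) → ℂ) :=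
  LinearEquiv.ofLinear
    ((Rmap ℓ i).comp (LinearMap.ker (formIJ ℓ i j r 1)).subtype)
    (LinearMap.codRestrict _ (Smap r ℓ hℓ i j) (Smap_mem r ℓ hℓ i j hij))
    (by ext y; simp [LinearMap.codRestrict_apply]; rw [RS])
    (by
      ext x
      simp only [LinearMap.coe_comp, Function.comp_apply, LinearMap.codRestrict_apply,
        Submodule.coe_subtype, LinearMap.id_coe, id_eq]
      exact congrFun (SR r ℓ hℓ i j hij x.1 x.2) _)

lemma map_comap_ker (r ℓ : ℕ) (hℓ : 2 ≤ ℓ) (i j : Fin ℓ) (hij : i ≠ j)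
    (f : Module.Dual ℂ (Fin ℓ → ℂ)) :
    Submodule.map ((equivH r ℓ hℓ i j hij : ↥(LinearMap.ker (formIJ ℓ i j r 1)) →ₗ[ℂ] (Fin (ℓ - 1) → ℂ)))
      (Submodule.comap (LinearMap.ker (formIJ ℓ i j r 1)).subtype (LinearMap.ker f))
    = LinearMap.ker (f ∘ₗ Smap r ℓ hℓ i j) := by
  ext y
  simp only [Submodule.mem_map, Submodule.mem_comap, LinearMap.mem_ker,
    LinearMap.comp_apply, Submodule.coe_subtype]
  constructor
  · rintro ⟨x, hx, rfl⟩
    have he : (equivH r ℓ hℓ i j hij : ↥(LinearMap.ker (formIJ ℓ i j r 1)) →ₗ[ℂ] _) x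
        = Rmap ℓ i x.1 := rfl
    rw [he, SR r ℓ hℓ i j hij x.1 x.2]
    exact hx
  · intro hy
    refine ⟨⟨Smap r ℓ hℓ i j y, Smap_mem r ℓ hℓ i j hij y⟩, hy, ?_⟩
    show Rmap ℓ i (Smap r ℓ hℓ i j y) = y
    exact RS r ℓ hℓ i j y

lemma mem_interArr {r ℓ k : ℕ} {S : Submodule ℂ (Fin ℓ → ℂ)} :
    S ∈ interArr r ℓ k ↔
      (∃ m : Fin ℓ, (m : ℕ) < k ∧ LinearMap.ker (coordForm ℓ m) = S) ∨
      (∃ p q : Fin ℓ, ∃ n : Fin r, p < q ∧ LinearMap.ker (formIJ ℓ p q r (n : ℕ)) = S) := by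
  simp only [interArr, Finset.mem_union, Finset.mem_image, Finset.mem_filter,
    Finset.mem_univ, true_and, Prod.exists]

lemma zeta_ne_zero (r : ℕ) : zeta r ≠ 0 := Complex.exp_ne_zero _

lemma zeta_pow_add (r : ℕ) (hr : 2 ≤ r) (a b : Fin r) :
    zeta r ^ (a : ℕ) * zeta r ^ (b : ℕ) = zeta r ^ (((a + b : Fin r)) : ℕ) := by
  have hprim : IsPrimitiveRoot (zeta r) r := Complex.isPrimitiveRoot_exp r (by omega)
  have h1 : zeta r ^ r = 1 := hprim.pow_eq_one
  rw [Fin.add_def]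
  rw [← pow_add, pow_eq_pow_mod _ h1]

lemma zeta_pow_one (r : ℕ) (hr : 2 ≤ r) :
    haveI : NeZero r := ⟨by omega⟩
    zeta r ^ (((1 : Fin r)) : ℕ) = zeta r := by
  haveI : NeZero r := ⟨by omega⟩
  have : ((1 : Fin r) : ℕ) = 1 := by
    rw [Fin.val_one', Nat.mod_eq_of_lt hr]
  rw [this, pow_one]

lemma zeta_mul_pow_sub_one (r : ℕ) (hr : 2 ≤ r) [NeZero r] (n : Fin r) :
    zeta r * zeta r ^ (((n - 1 : Fin r)) : ℕ) = zeta r ^ (n : ℕ) := by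
  calc zeta r * zeta r ^ (((n - 1 : Fin r)) : ℕ)
      = zeta r ^ (((1 : Fin r)) : ℕ) * zeta r ^ (((n - 1 : Fin r)) : ℕ) := by
        rw [zeta_pow_one r hr]
    _ = zeta r ^ (((1 + (n - 1) : Fin r)) : ℕ) := zeta_pow_add r hr _ _
    _ = zeta r ^ (n : ℕ) := by congr 2; abel

lemma zeta_pow_mul_one_sub (r : ℕ) (hr : 2 ≤ r) [NeZero r] (n : Fin r) :
    zeta r ^ (n : ℕ) * zeta r ^ (((1 - n : Fin r)) : ℕ) = zeta r := by
  calc zeta r ^ (n : ℕ) * zeta r ^ (((1 - n : Fin r)) : ℕ)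
      = zeta r ^ (((n + (1 - n) : Fin r)) : ℕ) := zeta_pow_add r hr _ _
    _ = zeta r ^ (((1 : Fin r)) : ℕ) := by congr 2; abel
    _ = zeta r := zeta_pow_one r hr

lemma zeta_pow_mul_zeta (r : ℕ) (hr : 2 ≤ r) [NeZero r] (n : Fin r) :
    zeta r ^ (n : ℕ) * zeta r = zeta r ^ (((n + 1 : Fin r)) : ℕ) := by
  calc zeta r ^ (n : ℕ) * zeta r
      = zeta r ^ (n : ℕ) * zeta r ^ (((1 : Fin r)) : ℕ) := by rw [zeta_pow_one r hr]
    _ = zeta r ^ (((n + 1 : Fin r)) : ℕ) := zeta_pow_add r hr _ _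

end Aux

end Arrangement

namespace Arrangement

/-- Restricting `𝒜^k_ℓ(r)` to a hyperplane `H = ker(x_i - ζ x_j)` with
`i < j ≤ k` yields an arrangement linearly isomorphic to `𝒜^{k-1}_{ℓ-1}(r)`. -/
theorem interArr_restr_noncoord (r ℓ k : ℕ) (hr : 2 ≤ r) (hl : 3 ≤ ℓ)
    (hk1 : 1 ≤ k) (hk : k ≤ ℓ - 1)
    (i j : Fin ℓ) (hij : i < j) (hj : (j : ℕ) < k) :
    ArrIso ℂ
      (restr ℂ (interArr r ℓ k) (LinearMap.ker (formIJ ℓ i j r 1)))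
      (interArr r (ℓ - 1) (k - 1)) := by
  haveI : NeZero r := ⟨by omega⟩
  have hℓ2 : 2 ≤ ℓ := by omega
  have hij' : i ≠ j := ne_of_lt hij
  have hijv : (i : ℕ) < (j : ℕ) := hij
  have hi2 : (i : ℕ) < ℓ := i.2
  have hj2 : (j : ℕ) < ℓ := j.2
  have hζ0 : zeta r ≠ 0 := zeta_ne_zero r
  have hζ1 : zeta r ^ (((1 : Fin r)) : ℕ) = zeta r := zeta_pow_one r hr
  set D : Fin ℓ → Fin (ℓ - 1) := del ℓ hℓ2 i with hD
  refine ⟨equivH r ℓ hℓ2 i j hij', ?_⟩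
  rw [restr, Finset.image_image]
  ext S
  simp only [Finset.mem_image, Function.comp_apply]
  constructor
  · -- membership in small arrangement gives a preimage hyperplane
    intro hS
    rw [mem_interArr] at hS
    -- the witness vector showing candidate hyperplanes differ from H₀
    have hx0H : Pi.single i (1 : ℂ) ∉ LinearMap.ker (formIJ ℓ i j r 1) := by
      rw [LinearMap.mem_ker, formIJ_apply, Pi.single_eq_same,
        Pi.single_eq_of_ne (Ne.symm hij')]
      simp
    rcases hS with ⟨p, hp, hSk⟩ | ⟨p, q, n, hpq, hSk⟩
    · refine ⟨LinearMap.ker (coordForm ℓ (emb ℓ i p)), ?_, ?_⟩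
      · rw [Finset.mem_erase]
        constructor
        · intro hEq
          apply hx0H
          rw [← hEq, LinearMap.mem_ker, coordForm_apply,
            Pi.single_eq_of_ne (emb_ne ℓ i p)]
        · rw [mem_interArr]
          refine Or.inl ⟨emb ℓ i p, ?_, rfl⟩
          have := emb_val ℓ i p
          have := p.2
          split_ifs at * <;> omega
      · rw [map_comap_ker r ℓ hℓ2 i j hij', ← hSk]
        congr 1
        apply LinearMap.ext; intro y
        rw [LinearMap.comp_apply, coordForm_apply, coordForm_apply,
          Smap_apply_ne r ℓ hℓ2 i j y _ (emb_ne ℓ i p), del_emb]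
    · refine ⟨LinearMap.ker (formIJ ℓ (emb ℓ i p) (emb ℓ i q) r (n : ℕ)), ?_, ?_⟩
      · rw [Finset.mem_erase]
        constructor
        · intro hEq
          apply hx0H
          rw [← hEq, LinearMap.mem_ker, formIJ_apply,
            Pi.single_eq_of_ne (emb_ne ℓ i p), Pi.single_eq_of_ne (emb_ne ℓ i q)]
          simp
        · rw [mem_interArr]
          exact Or.inr ⟨emb ℓ i p, emb ℓ i q, n, emb_lt ℓ i p q hpq, rfl⟩
      · rw [map_comap_ker r ℓ hℓ2 i j hij', ← hSk]
        congr 1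
        apply LinearMap.ext; intro y
        rw [LinearMap.comp_apply, formIJ_apply, formIJ_apply,
          Smap_apply_ne r ℓ hℓ2 i j y _ (emb_ne ℓ i p),
          Smap_apply_ne r ℓ hℓ2 i j y _ (emb_ne ℓ i q), del_emb, del_emb]
  · rintro ⟨K, hK, rfl⟩
    have hKA := Finset.mem_of_mem_erase hK
    have hKne := Finset.ne_of_mem_erase hK
    rw [mem_interArr] at hKA
    rw [mem_interArr]
    rcases hKA with ⟨m, hm, rfl⟩ | ⟨p, q, n, hpq, rfl⟩
    · -- coordinate hyperplane x_m = 0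
      rw [map_comap_ker r ℓ hℓ2 i j hij']
      by_cases hmi : m = i
      · -- becomes coordinate x_{D j}
        refine Or.inl ⟨D j, ?_, ?_⟩
        · rw [hD, del_val]; split_ifs <;> omega
        · have hform : coordForm ℓ m ∘ₗ Smap r ℓ hℓ2 i j
              = zeta r • coordForm (ℓ - 1) (D j) := by
            apply LinearMap.ext; intro y
            rw [LinearMap.comp_apply, coordForm_apply, hmi, Smap_apply_i,
              LinearMap.smul_apply, coordForm_apply, smul_eq_mul, hD]
          rw [hform, LinearMap.ker_smul _ _ hζ0]
      · refine Or.inl ⟨D m, ?_, ?_⟩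
        · have hmv : (m : ℕ) ≠ (i : ℕ) := fun h => hmi (Fin.ext h)
          rw [hD, del_val]; split_ifs <;> omega
        · have hform : coordForm ℓ m ∘ₗ Smap r ℓ hℓ2 i j
              = coordForm (ℓ - 1) (D m) := by
            apply LinearMap.ext; intro y
            rw [LinearMap.comp_apply, coordForm_apply, coordForm_apply,
              Smap_apply_ne r ℓ hℓ2 i j y m hmi, hD]
          rw [hform]
    · -- hyperplane x_p = ζ^n x_q
      rw [map_comap_ker r ℓ hℓ2 i j hij']
      have hpqv : (p : ℕ) < (q : ℕ) := hpq
      by_cases hpi : p = i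
      · -- p = i, q ≠ i
        have hqi : q ≠ i := by intro h; rw [hpi, h] at hpq; exact lt_irrefl _ hpq
        by_cases hqj : q = j
        · -- between i and j
          by_cases hn : zeta r ^ (n : ℕ) = zeta r
          · exfalso
            apply hKne
            rw [hpi, hqj]
            congr 1
            rw [formIJ, formIJ, hn, pow_one]
          · refine Or.inl ⟨D j, ?_, ?_⟩
            · rw [hD, del_val]; split_ifs <;> omega
            · have hform : formIJ ℓ p q r (n : ℕ) ∘ₗ Smap r ℓ hℓ2 i j
                  = (zeta r - zeta r ^ (n : ℕ)) • coordForm (ℓ - 1) (D j) := by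
                apply LinearMap.ext; intro y
                rw [LinearMap.comp_apply, formIJ_apply, hpi, hqj, Smap_apply_i,
                  Smap_apply_ne r ℓ hℓ2 i j y j (Ne.symm hij'),
                  LinearMap.smul_apply, coordForm_apply, smul_eq_mul, hD]
                ring
              rw [hform, LinearMap.ker_smul]
              exact sub_ne_zero_of_ne (Ne.symm hn)
        · -- between j and q in the quotient
          have hqjD : D q ≠ D j := by
            intro h
            apply hqj
            have := congrArg (emb ℓ i) h
            rwa [hD, emb_del ℓ hℓ2 i q hqi, emb_del ℓ hℓ2 i j (Ne.symm hij')] at this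
          rcases lt_trichotomy (D j) (D q) with hor | hor | hor
          · refine Or.inr ⟨D j, D q, n - 1, hor, ?_⟩
            have hpow := zeta_mul_pow_sub_one r hr n
            have hform : formIJ ℓ p q r (n : ℕ) ∘ₗ Smap r ℓ hℓ2 i j
                = zeta r • formIJ (ℓ - 1) (D j) (D q) r ((n - 1 : Fin r) : ℕ) := by
              apply LinearMap.ext; intro y
              rw [LinearMap.comp_apply, formIJ_apply, hpi, Smap_apply_i,
                Smap_apply_ne r ℓ hℓ2 i j y q hqi,
                LinearMap.smul_apply, formIJ_apply, smul_eq_mul, hD]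
              rw [mul_sub, ← mul_assoc, hpow]
            rw [hform, LinearMap.ker_smul _ _ hζ0]
          · exact absurd hor.symm hqjD
          · refine Or.inr ⟨D q, D j, 1 - n, hor, ?_⟩
            have hpow := zeta_pow_mul_one_sub r hr n
            have hform : formIJ ℓ p q r (n : ℕ) ∘ₗ Smap r ℓ hℓ2 i j
                = (-(zeta r ^ (n : ℕ))) • formIJ (ℓ - 1) (D q) (D j) r ((1 - n : Fin r) : ℕ) := by
              apply LinearMap.ext; intro y
              rw [LinearMap.comp_apply, formIJ_apply, hpi, Smap_apply_i,
                Smap_apply_ne r ℓ hℓ2 i j y q hqi,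
                LinearMap.smul_apply, formIJ_apply, smul_eq_mul, hD]
              rw [neg_mul, mul_sub, ← mul_assoc, hpow]
              ring
            rw [hform, LinearMap.ker_smul]
            exact neg_ne_zero.mpr (pow_ne_zero _ hζ0)
      · by_cases hqi : q = i
        · -- q = i, p < i
          have hpj : p ≠ j := by
            intro h
            rw [h] at hpqv
            rw [hqi] at hpqv
            omega
          refine Or.inr ⟨D p, D j, n + 1, ?_, ?_⟩
          · apply del_lt ℓ hℓ2 i p j _ hpi (Ne.symm hij')
            have : (p : ℕ) < (i : ℕ) := by rw [hqi] at hpqv; exact hpqv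
            exact lt_trans (show p < i from this) hij
          · have hpow := zeta_pow_mul_zeta r hr n
            have hform : formIJ ℓ p q r (n : ℕ) ∘ₗ Smap r ℓ hℓ2 i j
                = formIJ (ℓ - 1) (D p) (D j) r ((n + 1 : Fin r) : ℕ) := by
              apply LinearMap.ext; intro y
              rw [LinearMap.comp_apply, formIJ_apply, hqi, Smap_apply_i,
                Smap_apply_ne r ℓ hℓ2 i j y p hpi, formIJ_apply, hD,
                ← mul_assoc, hpow]
            rw [hform]
        · -- p, q ≠ i
          refine Or.inr ⟨D p, D q, n, del_lt ℓ hℓ2 i p q hpq hpi hqi, ?_⟩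
          have hform : formIJ ℓ p q r (n : ℕ) ∘ₗ Smap r ℓ hℓ2 i j
              = formIJ (ℓ - 1) (D p) (D q) r (n : ℕ) := by
            apply LinearMap.ext; intro y
            rw [LinearMap.comp_apply, formIJ_apply,
              Smap_apply_ne r ℓ hℓ2 i j y p hpi,
              Smap_apply_ne r ℓ hℓ2 i j y q hqi, formIJ_apply, hD]
          rw [hform]

end Arrangement
end
end
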